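/- (Theorem 2: boundary feasibility via the neural-operator derivative condition.) Let α > 0, T > 0, and set C_{α,T} = α/(e^{αT} − 1). Let U : ℝ → ℝ and Y : ℝ → ℝ be differentiable with Y(0) = U(0), and suppose there exist functions Λ, μ : ℝ → ℝ such that Y'(t) = Λ(t)·U'(t) + μ(t) for all t ∈ [0, T] (the affine dependence of the modeled output derivative on the input derivative). Let φ : ℝ × ℝ → ℝ be continuously differentiable and let S₀ ⊆ ℝ satisfy {y ∈ ℝ : φ(t, y) ≤ 0} ⊆ S₀ for all t ∈ [0, T]. If for all t ∈ [0, T] it holds that ∂φ/∂y(t, Y(t))·(Λ(t)·U'(t) + μ(t)) + ∂φ/∂t(t, Y(t)) + α·φ(t, Y(t)) + C_{α,T}·φ(0, U(0)) ≤ 0, then there exists t₀ ∈ [0, T] such that Y(t) ∈ S₀ for all t ∈ [t₀, T]. -/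

import Mathlib

/-!
Weight `φ(t, Y(t))` by `e^{αt}` after shifting it by `c = φ(0, U(0)) / (e^{αT} - 1)`, chosen so
that `α c = C_{α,T} φ(0, U(0))`. The hypothesis then says exactly that
`h(t) = e^{αt} (φ(t, Y(t)) + c)` is nonincreasing on `[0, T]`, and `h(T) ≤ h(0) = e^{αT} c`
forces `φ(T, Y(T)) ≤ 0`; so `t₀ = T` works.
-/

open Set

noncomputable def finiteTimeConvergenceConst (α T : ℝ) : ℝ := α / (Real.exp (α * T) - 1)

theorem DifferentiableAt.hasDerivAt_uncurry_comp {F : ℝ → ℝ → ℝ} {y : ℝ → ℝ} {t y' : ℝ}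
    (hF : DifferentiableAt ℝ (Function.uncurry F) (t, y t)) (hy : HasDerivAt y y' t) :
    HasDerivAt (fun s => F s (y s))
      (deriv (fun s => F s (y t)) t + deriv (fun x => F t x) (y t) * y') t := by
  set L := fderiv ℝ (Function.uncurry F) (t, y t)
  have hL := hF.hasFDerivAt
  have h_time : HasDerivAt (fun s => F s (y t)) (L (1, 0)) t :=
    by exact hL.comp_hasDerivAt t ((hasDerivAt_id t).prodMk (hasDerivAt_const t (y t)))
  have h_space : HasDerivAt (fun x => F t x) (L (0, 1)) (y t) :=
    hL.comp_hasDerivAt (y t) ((hasDerivAt_const (y t) t).prodMk (hasDerivAt_id' (y t)))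
  have h_curve : HasDerivAt (fun s => F s (y s)) (L (1, y')) t :=
    by exact hL.comp_hasDerivAt t ((hasDerivAt_id t).prodMk hy)
  have h_split : L (1, y') = L (1, 0) + L (0, 1) * y' := by
    rw [show ((1 : ℝ), y') = (1, 0) + y' • (0, 1) by simp, map_add, map_smul, smul_eq_mul,
      mul_comm]
  rwa [h_time.deriv, h_space.deriv, ← h_split]

theorem antitoneOn_exp_mul_add_of_hasDerivAt {g g' : ℝ → ℝ} {α c : ℝ} {s : Set ℝ}
    (hs : Convex ℝ s) (hg : ∀ t ∈ s, HasDerivAt g (g' t) t)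
    (hbound : ∀ t ∈ s, g' t + α * (g t + c) ≤ 0) :
    AntitoneOn (fun t => Real.exp (α * t) * (g t + c)) s := by
  have hderiv : ∀ t ∈ s, HasDerivAt (fun t => Real.exp (α * t) * (g t + c))
      (Real.exp (α * t) * (g' t + α * (g t + c))) t := by
    intro t ht
    have hexp : HasDerivAt (fun t => Real.exp (α * t)) (Real.exp (α * t) * α) t :=
      ((hasDerivAt_id' t).const_mul α).exp.congr_deriv (by simp)
    exact (hexp.fun_mul ((hg t ht).add_const c)).congr_deriv (by ring)
  refine antitoneOn_of_hasDerivWithinAt_nonpos hs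
    (fun t ht => (hderiv t ht).continuousAt.continuousWithinAt)
    (fun t ht => (hderiv t (interior_subset ht)).hasDerivWithinAt)
    (fun t ht => mul_nonpos_of_nonneg_of_nonpos (Real.exp_pos _).le
      (hbound t (interior_subset ht)))

theorem nonpos_of_hasDerivAt_add_finiteTimeConvergenceConst {g g' : ℝ → ℝ} {α T : ℝ}
    (hα : α ≠ 0) (hT : 0 < T) (hg : ∀ t ∈ Icc 0 T, HasDerivAt g (g' t) t)
    (hbound : ∀ t ∈ Icc 0 T,
      g' t + α * g t + finiteTimeConvergenceConst α T * g 0 ≤ 0) :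
    g T ≤ 0 := by
  set E := Real.exp (α * T)
  have hE : E - 1 ≠ 0 :=
    sub_ne_zero.mpr ((Real.exp_eq_one_iff _).not.mpr (mul_ne_zero hα hT.ne'))
  set c := g 0 / (E - 1) with hc_def
  have hc : g 0 + c = E * c := by
    rw [hc_def]
    field_simp [hE]
    ring
  have hαc : α * c = finiteTimeConvergenceConst α T * g 0 := by
    rw [finiteTimeConvergenceConst, div_mul_comm, mul_comm]
  have hmono := antitoneOn_exp_mul_add_of_hasDerivAt (α := α) (c := c) (convex_Icc 0 T) hg
    (fun t ht => by linarith [hbound t ht])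
  have hT0 : E * (g T + c) ≤ E * c := by
    simpa [hc] using hmono (left_mem_Icc.mpr hT.le) (right_mem_Icc.mpr hT.le) hT.le
  linarith [le_of_mul_le_mul_left hT0 (Real.exp_pos _)]

theorem stmt14_general (α T : ℝ) (hα : 0 < α) (hT : 0 < T)
    (U Y : ℝ → ℝ) (hY : Differentiable ℝ Y)
    (h0 : Y 0 = U 0)
    (Λ μ : ℝ → ℝ)
    (haff : ∀ t ∈ Set.Icc (0 : ℝ) T, deriv Y t = Λ t * deriv U t + μ t)
    (φ : ℝ → ℝ → ℝ) (hφ : ContDiff ℝ 1 (Function.uncurry φ))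
    (S₀ : Set ℝ)
    (hS : ∀ t ∈ Set.Icc (0 : ℝ) T, {y : ℝ | φ t y ≤ 0} ⊆ S₀)
    (hcond : ∀ t ∈ Set.Icc (0 : ℝ) T,
      deriv (fun y => φ t y) (Y t) * (Λ t * deriv U t + μ t)
          + deriv (fun s => φ s (Y t)) t
          + α * φ t (Y t)
          + (α / (Real.exp (α * T) - 1)) * φ 0 (U 0) ≤ 0) :
    ∃ t₀ ∈ Set.Icc (0 : ℝ) T, ∀ t ∈ Set.Icc t₀ T, Y t ∈ S₀ := by
  have hg : ∀ t ∈ Icc 0 T, HasDerivAt (fun s => φ s (Y s))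
      (deriv (fun s => φ s (Y t)) t + deriv (fun y => φ t y) (Y t) * deriv Y t) t :=
    fun t _ => ((hφ.differentiable one_ne_zero) _).hasDerivAt_uncurry_comp (hY t).hasDerivAt
  have hφT : φ T (Y T) ≤ 0 := by
    refine nonpos_of_hasDerivAt_add_finiteTimeConvergenceConst (g := fun s => φ s (Y s))
      hα.ne' hT hg fun t ht => ?_
    rw [haff t ht, h0, finiteTimeConvergenceConst]
    linarith [hcond t ht]
  refine ⟨T, right_mem_Icc.mpr hT.le, fun t ht => ?_⟩
  obtain rfl : t = T := le_antisymm ht.2 ht.1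
  exact hS t (right_mem_Icc.mpr hT.le) hφT

/-- Theorem 2: boundary feasibility via the neural-operator
derivative condition: For α > 0, T > 0, C_{α,T} = α/(e^{αT} − 1), U, Y : ℝ → ℝ
differentiable with Y(0) = U(0) and Y'(t) = Λ(t)·U'(t) + μ(t) on [0,T],
φ : ℝ × ℝ → ℝ continuously differentiable, and S₀ containing each sublevel set
{y | φ(t,y) ≤ 0} for t ∈ [0,T]: if for all t ∈ [0,T],
∂φ/∂y(t,Y(t))·(Λ(t)·U'(t) + μ(t)) + ∂φ/∂t(t,Y(t)) + α·φ(t,Y(t)) + C_{α,T}·φ(0,U(0)) ≤ 0,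
then there is t₀ ∈ [0,T] with Y(t) ∈ S₀ for all t ∈ [t₀,T]. -/
theorem stmt14 (α T : ℝ) (hα : 0 < α) (hT : 0 < T)
    (U Y : ℝ → ℝ) (hU : Differentiable ℝ U) (hY : Differentiable ℝ Y)
    (h0 : Y 0 = U 0)
    (Λ μ : ℝ → ℝ)
    (haff : ∀ t ∈ Set.Icc (0 : ℝ) T, deriv Y t = Λ t * deriv U t + μ t)
    (φ : ℝ → ℝ → ℝ) (hφ : ContDiff ℝ 1 (Function.uncurry φ))
    (S₀ : Set ℝ)
    (hS : ∀ t ∈ Set.Icc (0 : ℝ) T, {y : ℝ | φ t y ≤ 0} ⊆ S₀)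
    (hcond : ∀ t ∈ Set.Icc (0 : ℝ) T,
      deriv (fun y => φ t y) (Y t) * (Λ t * deriv U t + μ t)
          + deriv (fun s => φ s (Y t)) t
          + α * φ t (Y t)
          + (α / (Real.exp (α * T) - 1)) * φ 0 (U 0) ≤ 0) :
    ∃ t₀ ∈ Set.Icc (0 : ℝ) T, ∀ t ∈ Set.Icc t₀ T, Y t ∈ S₀ :=
  stmt14_general α T hα hT U Y hY h0 Λ μ haff φ hφ S₀ hS hcond
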